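/- arXiv:2302.06032 — 2 statements merged into one kernel-verified Lean document; each statement's English description precedes it below -/
import Mathlib

section
/- Suppose $F: \mathbb{R}^d \to \mathbb{R}$ is differentiable and each partial derivative satisfies the coordinatewise smoothness bound $|\partial_j F(x) - \partial_j F(y)| \le \frac{L_j}{\sqrt{d}} \|x - y\|_2$ for all $x, y$. Then for all $x, y \in \mathbb{R}^d$, $F(x) - F(y) \le \langle \nabla F(y), x - y\rangle + \left(\sum_{j=1}^d L_j |x_j - y_j|\right) \frac{\|x-y\|_2}{2\sqrt{d}}$. -/
/-!
Along the segment `c t = y + t • (x - y)`, expanding `x - y` in the standard basis and applying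
the bound on each partial derivative shows that the directional derivative of `F ∘ c` exceeds
`⟪∇F(y), x - y⟫` by at most `t · (∑ L_j |x_j - y_j|) ‖x - y‖ / √d`. Integrating this linear drift
over `t ∈ [0, 1]` produces the factor `1/2`.
-/

open Set

theorem EuclideanSpace.linearMap_apply_eq_sum {𝕜 ι M : Type*} [RCLike 𝕜] [Fintype ι]
    [DecidableEq ι] [AddCommGroup M] [Module 𝕜 M] (φ : EuclideanSpace 𝕜 ι →ₗ[𝕜] M)
    (v : EuclideanSpace 𝕜 ι) : φ v = ∑ j, v j • φ (EuclideanSpace.single j 1) := by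
  conv_lhs => rw [← (EuclideanSpace.basisFun ι 𝕜).sum_repr v]
  simp [map_sum, map_smul, EuclideanSpace.basisFun_apply]

theorem EuclideanSpace.sub_apply_le_sum_mul_abs {ι : Type*} [Fintype ι] [DecidableEq ι]
    (φ ψ : EuclideanSpace ℝ ι →L[ℝ] ℝ) (c : ι → ℝ)
    (hc : ∀ j, |φ (EuclideanSpace.single j 1) - ψ (EuclideanSpace.single j 1)| ≤ c j)
    (v : EuclideanSpace ℝ ι) : φ v - ψ v ≤ ∑ j, c j * |v j| := by
  rw [← sub_apply, ← ContinuousLinearMap.coe_coe,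
    EuclideanSpace.linearMap_apply_eq_sum]
  refine Finset.sum_le_sum fun j _ => ?_
  calc v j • (φ - ψ) (EuclideanSpace.single j 1)
      ≤ |v j| * |φ (EuclideanSpace.single j 1) - ψ (EuclideanSpace.single j 1)| := by
        rw [smul_eq_mul, ← abs_mul]; exact le_abs_self _
    _ ≤ c j * |v j| := by
        rw [mul_comm]; exact mul_le_mul_of_nonneg_right (hc j) (abs_nonneg _)

theorem sub_le_add_half_of_deriv_le {f f' : ℝ → ℝ} {A B : ℝ} (hf : ∀ t, HasDerivAt f (f' t) t)
    (hbound : ∀ t ∈ Icc (0 : ℝ) 1, f' t ≤ A + B * t) : f 1 - f 0 ≤ A + B / 2 := by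
  set g : ℝ → ℝ := fun t => f t - (A * t + B * t ^ 2 / 2)
  have hg : ∀ t, HasDerivAt g (f' t - (A + B * t)) t := fun t => by
    have hq : HasDerivAt (fun t : ℝ => A * t + B * t ^ 2 / 2) (A + B * t) t := by
      refine (((hasDerivAt_id' t).const_mul A).add
        (((hasDerivAt_pow 2 t).const_mul B).div_const 2)).congr_deriv ?_
      push_cast; ring
    exact (hf t).sub hq
  have hanti : AntitoneOn g (Icc 0 1) := by
    refine antitoneOn_of_deriv_nonpos (convex_Icc 0 1)
      (fun t _ => (hg t).continuousAt.continuousWithinAt)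
      (fun t _ => (hg t).differentiableAt.differentiableWithinAt) fun t ht => ?_
    rw [interior_Icc] at ht
    rw [(hg t).deriv, sub_nonpos]
    exact hbound t (Ioo_subset_Icc_self ht)
  have := hanti (left_mem_Icc.2 zero_le_one) (right_mem_Icc.2 zero_le_one) zero_le_one
  simp only [g] at this
  linarith

theorem sub_le_fderiv_add_of_fderiv_segment_le {E : Type*} [NormedAddCommGroup E]
    [NormedSpace ℝ E] {F : E → ℝ} (hF : Differentiable ℝ F) {x y : E} {B : ℝ}
    (hdrift : ∀ t ∈ Icc (0 : ℝ) 1,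
      fderiv ℝ F (y + t • (x - y)) (x - y) - fderiv ℝ F y (x - y) ≤ B * t) :
    F x - F y ≤ fderiv ℝ F y (x - y) + B / 2 := by
  have hline : ∀ t : ℝ, HasDerivAt (fun t => y + t • (x - y)) (x - y) t := fun t => by
    simpa using ((hasDerivAt_id t).smul_const (x - y)).const_add y
  have := sub_le_add_half_of_deriv_le (A := fderiv ℝ F y (x - y)) (B := B)
    (fun t => (hF _).hasFDerivAt.comp_hasDerivAt t (hline t))
    (fun t ht => by linarith [hdrift t ht])
  simp only [Function.comp_def, one_smul, zero_smul, add_zero, add_sub_cancel] at this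
  linarith

theorem stmt_9_general (d : ℕ) (F : EuclideanSpace ℝ (Fin d) → ℝ)
    (hF : Differentiable ℝ F) (L : Fin d → ℝ)
    (hsmooth : ∀ x y : EuclideanSpace ℝ (Fin d), ∀ j : Fin d,
      |fderiv ℝ F x (EuclideanSpace.single j 1) - fderiv ℝ F y (EuclideanSpace.single j 1)|
        ≤ L j / Real.sqrt d * ‖x - y‖) :
    ∀ x y : EuclideanSpace ℝ (Fin d),
      F x - F y ≤ fderiv ℝ F y (x - y)
        + (∑ j, L j * |x j - y j|) * ‖x - y‖ / (2 * Real.sqrt d) := by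
  intro x y
  set S := ∑ j, L j * |x j - y j|
  have hdrift : ∀ t ∈ Icc (0 : ℝ) 1,
      fderiv ℝ F (y + t • (x - y)) (x - y) - fderiv ℝ F y (x - y)
        ≤ S * ‖x - y‖ / Real.sqrt d * t := fun t ht => by
    have hdist : ‖y + t • (x - y) - y‖ = t * ‖x - y‖ := by
      rw [add_sub_cancel_left, norm_smul, Real.norm_eq_abs, abs_of_nonneg ht.1]
    calc _ ≤ ∑ j, L j / Real.sqrt d * ‖y + t • (x - y) - y‖ * |(x - y) j| :=
          EuclideanSpace.sub_apply_le_sum_mul_abs _ _ _ (fun j => hsmooth _ _ j) _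
      _ = S * ‖x - y‖ / Real.sqrt d * t := by
          simp only [hdist, S, PiLp.sub_apply, Finset.sum_mul, Finset.sum_div]
          refine Finset.sum_congr rfl fun j _ => ?_
          ring
  have := sub_le_fderiv_add_of_fderiv_segment_le hF hdrift
  rwa [div_div, mul_comm (Real.sqrt d) 2] at this

theorem stmt_9 (d : ℕ) (F : EuclideanSpace ℝ (Fin d) → ℝ)
    (hF : Differentiable ℝ F) (L : Fin d → ℝ) (hL : ∀ j, 0 < L j)
    (hsmooth : ∀ x y : EuclideanSpace ℝ (Fin d), ∀ j : Fin d,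
      |fderiv ℝ F x (EuclideanSpace.single j 1) - fderiv ℝ F y (EuclideanSpace.single j 1)|
        ≤ L j / Real.sqrt d * ‖x - y‖) :
    ∀ x y : EuclideanSpace ℝ (Fin d),
      F x - F y ≤ fderiv ℝ F y (x - y)
        + (∑ j, L j * |x j - y j|) * ‖x - y‖ / (2 * Real.sqrt d) :=
  stmt_9_general d F hF L hsmooth
end

section
/- Let $F:\mathbb{R}^d\to\mathbb{R}$ be differentiable with coordinatewise smoothness $|\partial_j F(x)-\partial_j F(y)| \le (L_j/\sqrt{d})\|x-y\|_2$, and let $x_{t+1} = x_t - \eta m_t/\sqrt{v_t}$ coordinatewise with $v_t$ as in the Generalized SignSTORM algorithm ($v_0=0$, $v_t = \beta_2 v_{t-1}+(1-\beta_2)m_t^2$, $0\le\beta_2<1$). Then $F(x_{t+1}) - F(x_t) \le -\sum_{j=1}^{d} \frac{\eta\, \partial_j F(x_t)\, m_{t,j}}{\sqrt{v_{t,j}}} + \frac{\eta^2 \|L\|_1}{2(1-\beta_2)}$, where $\|L\|_1 = \sum_j L_j$. -/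
/-!
Along the segment from `x` to `y = x + u`, the derivative of `s ↦ F (x + s • u)` moves by at
most `(∑ⱼ Lⱼ/√d · |uⱼ|) · s‖u‖`, since each partial derivative is `Lⱼ/√d`-Lipschitz;
integrating (here: comparing with a parabola) gives the descent inequality
`F y - F x ≤ F'(x) u + (∑ⱼ Lⱼ/√d · |uⱼ|) ‖u‖ / 2`.
For the update, `v_t ≥ (1 - β₂) m_t²` because `v` is a nonnegative exponential moving average,
so every coordinate moves by at most `|η|/√(1 - β₂)`; then `‖u‖ ≤ √d · |η|/√(1 - β₂)` and the
`√d` cancels against the `1/√d` in the smoothness constants, leaving `η² ‖L‖₁ / (2(1 - β₂))`.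
-/

open Finset

theorem sub_le_of_hasDerivAt_of_le_add_mul {f φ : ℝ → ℝ} {K : ℝ}
    (hf : ∀ s, HasDerivAt f (φ s) s) (hφ : ∀ s ∈ Set.Ioo (0 : ℝ) 1, φ s ≤ φ 0 + K * s) :
    f 1 - f 0 ≤ φ 0 + K / 2 := by
  let g : ℝ → ℝ := fun s => f s - φ 0 * s - K / 2 * s ^ 2
  have hg : ∀ s, HasDerivAt g (φ s - φ 0 - K * s) s := fun s =>
    (((hf s).sub ((hasDerivAt_id s).const_mul (φ 0))).sub
      ((hasDerivAt_pow 2 s).const_mul (K / 2))).congr_deriv (by norm_num; ring)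
  have hanti : AntitoneOn g (Set.Icc 0 1) := by
    refine antitoneOn_of_hasDerivWithinAt_nonpos (convex_Icc 0 1)
      (fun s _ => (hg s).continuousAt.continuousWithinAt)
      (fun s _ => (hg s).hasDerivWithinAt) fun s hs => ?_
    rw [interior_Icc] at hs
    linarith [hφ s hs]
  have := hanti (by norm_num) (by norm_num) zero_le_one
  simp only [g] at this
  linarith

theorem sub_le_fderiv_add_of_fderiv_apply_sub_le {E : Type*} [NormedAddCommGroup E]
    [NormedSpace ℝ E] {F : E → ℝ} (hF : Differentiable ℝ F) (x u : E) (C : ℝ)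
    (hC : ∀ z, fderiv ℝ F z u - fderiv ℝ F x u ≤ C * ‖z - x‖) :
    F (x + u) - F x ≤ fderiv ℝ F x u + C * ‖u‖ / 2 := by
  have hpath : ∀ s : ℝ, HasDerivAt (fun s : ℝ => F (x + s • u)) (fderiv ℝ F (x + s • u) u) s :=
    fun s => (hF _).hasFDerivAt.comp_hasDerivAt s
      (by simpa using ((hasDerivAt_id s).smul_const u).const_add x)
  have := sub_le_of_hasDerivAt_of_le_add_mul (K := C * ‖u‖) hpath fun s hs => by
    have := hC (x + s • u)
    rw [add_sub_cancel_left, norm_smul, Real.norm_of_nonneg hs.1.le] at this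
    simp only [zero_smul, add_zero]
    linarith
  simpa [mul_div_assoc] using this

theorem EuclideanSpace.clm_apply_eq_sum {ι : Type*} [Fintype ι] [DecidableEq ι]
    (f : EuclideanSpace ℝ ι →L[ℝ] ℝ) (u : EuclideanSpace ℝ ι) :
    f u = ∑ j, u j * f (EuclideanSpace.single j 1) := by
  conv_lhs => rw [← (EuclideanSpace.basisFun ι ℝ).sum_repr u]
  simp [smul_eq_mul]

theorem abs_fderiv_apply_sub_le_of_partial {ι : Type*} [Fintype ι] [DecidableEq ι]
    {F : EuclideanSpace ℝ ι → ℝ} {c : ι → ℝ}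
    (hc : ∀ x y j, |fderiv ℝ F x (EuclideanSpace.single j 1)
      - fderiv ℝ F y (EuclideanSpace.single j 1)| ≤ c j * ‖x - y‖)
    (x y u : EuclideanSpace ℝ ι) :
    |fderiv ℝ F x u - fderiv ℝ F y u| ≤ (∑ j, c j * |u j|) * ‖x - y‖ := by
  rw [EuclideanSpace.clm_apply_eq_sum (fderiv ℝ F x),
    EuclideanSpace.clm_apply_eq_sum (fderiv ℝ F y), ← sum_sub_distrib, sum_mul]
  refine (abs_sum_le_sum_abs _ _).trans (sum_le_sum fun j _ => ?_)
  rw [← mul_sub, abs_mul]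
  calc |u j| * |_| ≤ |u j| * (c j * ‖x - y‖) := by gcongr; exact hc x y j
    _ = c j * |u j| * ‖x - y‖ := by ring

theorem sub_le_fderiv_add_of_partial {ι : Type*} [Fintype ι] [DecidableEq ι]
    {F : EuclideanSpace ℝ ι → ℝ} (hF : Differentiable ℝ F) {c : ι → ℝ}
    (hc : ∀ x y j, |fderiv ℝ F x (EuclideanSpace.single j 1)
      - fderiv ℝ F y (EuclideanSpace.single j 1)| ≤ c j * ‖x - y‖)
    (x y : EuclideanSpace ℝ ι) :
    F y - F x ≤ fderiv ℝ F x (y - x) + (∑ j, c j * |(y - x) j|) * ‖y - x‖ / 2 := by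
  simpa using sub_le_fderiv_add_of_fderiv_apply_sub_le hF x (y - x) _
    fun z => (le_abs_self _).trans (abs_fderiv_apply_sub_le_of_partial hc z x (y - x))

theorem EuclideanSpace.norm_le_sqrt_card_mul {ι : Type*} [Fintype ι] {u : EuclideanSpace ℝ ι}
    {B : ℝ} (hB : 0 ≤ B) (hu : ∀ j, |u j| ≤ B) : ‖u‖ ≤ √(Fintype.card ι) * B := by
  rw [EuclideanSpace.norm_eq, ← Real.sqrt_sq hB, ← Real.sqrt_mul (Nat.cast_nonneg _)]
  refine Real.sqrt_le_sqrt ?_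
  calc ∑ j, ‖u j‖ ^ 2 ≤ ∑ _j : ι, B ^ 2 :=
        sum_le_sum fun j _ => pow_le_pow_left₀ (norm_nonneg _) (hu j) 2
    _ = Fintype.card ι * B ^ 2 := by simp

theorem sum_mul_abs_mul_norm_le {d : ℕ} {L : Fin d → ℝ} (hL : ∀ j, 0 ≤ L j)
    {u : EuclideanSpace ℝ (Fin d)} {B : ℝ} (hu : ∀ j, |u j| ≤ B) :
    (∑ j, L j / √d * |u j|) * ‖u‖ ≤ B ^ 2 * ∑ j, L j := by
  rcases Nat.eq_zero_or_pos d with rfl | hd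
  · simp
  have hB : 0 ≤ B := (abs_nonneg _).trans (hu ⟨0, hd⟩)
  calc (∑ j, L j / √d * |u j|) * ‖u‖ ≤ (∑ j, L j / √d * B) * (√d * B) := by
        have hLd : ∀ j, 0 ≤ L j / √d := fun j => div_nonneg (hL j) (Real.sqrt_nonneg _)
        refine mul_le_mul (sum_le_sum fun j _ => mul_le_mul_of_nonneg_left (hu j) (hLd j))
          (by simpa using EuclideanSpace.norm_le_sqrt_card_mul hB hu) (norm_nonneg _)
          (sum_nonneg fun j _ => mul_nonneg (hLd j) hB)
    _ = B ^ 2 * ∑ j, L j := by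
        have : (√d : ℝ) ≠ 0 := by positivity
        rw [← sum_mul, ← sum_div]
        field_simp

theorem abs_div_sqrt_le_one_div_sqrt {a c w : ℝ} (hc : 0 < c) (h : c * a ^ 2 ≤ w) :
    |a / √w| ≤ 1 / √c := by
  rw [abs_div, abs_of_nonneg (Real.sqrt_nonneg w)]
  refine div_le_of_le_mul₀ (Real.sqrt_nonneg w) (by positivity) ?_
  rw [one_div_mul_eq_div, le_div_iff₀ (Real.sqrt_pos.2 hc)]
  calc |a| * √c = √(c * a ^ 2) := by rw [Real.sqrt_mul hc.le, Real.sqrt_sq_eq_abs, mul_comm]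
    _ ≤ √w := Real.sqrt_le_sqrt h

theorem secondMoment_nonneg {β₂ : ℝ} {m v : ℕ → ℝ} (hβ₂0 : 0 ≤ β₂) (hβ₂1 : β₂ ≤ 1)
    (hv0 : v 0 = 0) (hvrec : ∀ t, 1 ≤ t → v t = β₂ * v (t - 1) + (1 - β₂) * m t ^ 2) :
    ∀ t, 0 ≤ v t
  | 0 => hv0.ge
  | t + 1 => by
    rw [hvrec (t + 1) le_add_self, Nat.add_sub_cancel]
    have := secondMoment_nonneg hβ₂0 hβ₂1 hv0 hvrec t
    have : 0 ≤ 1 - β₂ := sub_nonneg.2 hβ₂1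
    positivity

theorem mul_sq_le_secondMoment {β₂ : ℝ} {m v : ℕ → ℝ} (hβ₂0 : 0 ≤ β₂) (hβ₂1 : β₂ ≤ 1)
    (hv0 : v 0 = 0) (hvrec : ∀ t, 1 ≤ t → v t = β₂ * v (t - 1) + (1 - β₂) * m t ^ 2)
    {t : ℕ} (ht : 1 ≤ t) : (1 - β₂) * m t ^ 2 ≤ v t := by
  rw [hvrec t ht]
  have := secondMoment_nonneg hβ₂0 hβ₂1 hv0 hvrec (t - 1)
  nlinarith

theorem stmt_17_general (d : ℕ) (F : EuclideanSpace ℝ (Fin d) → ℝ)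
    (hF : Differentiable ℝ F) (L : Fin d → ℝ) (hL : ∀ j, 0 < L j)
    (η β₂ : ℝ) (hβ₂0 : 0 ≤ β₂) (hβ₂1 : β₂ < 1)
    (hsmooth : ∀ x y : EuclideanSpace ℝ (Fin d), ∀ j : Fin d,
      |fderiv ℝ F x (EuclideanSpace.single j 1) - fderiv ℝ F y (EuclideanSpace.single j 1)|
        ≤ L j / Real.sqrt d * ‖x - y‖)
    (x m v : ℕ → EuclideanSpace ℝ (Fin d))
    (hv0 : ∀ j, v 0 j = 0)
    (hvrec : ∀ t : ℕ, 1 ≤ t → ∀ j, v t j = β₂ * v (t - 1) j + (1 - β₂) * (m t j) ^ 2)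
    (hx : ∀ t : ℕ, 1 ≤ t → ∀ j, x (t + 1) j = x t j - η * m t j / Real.sqrt (v t j)) :
    ∀ t : ℕ, 1 ≤ t →
      F (x (t + 1)) - F (x t)
        ≤ -(∑ j, η * fderiv ℝ F (x t) (EuclideanSpace.single j 1) * m t j
              / Real.sqrt (v t j))
          + η ^ 2 * (∑ j, L j) / (2 * (1 - β₂)) := by
  intro t ht
  have hstep : ∀ j, |(x (t + 1) - x t) j| ≤ |η| / √(1 - β₂) := fun j => by
    rw [PiLp.sub_apply, hx t ht j, sub_sub_cancel_left, abs_neg, mul_div_assoc, abs_mul,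
      div_eq_mul_one_div |η|]
    exact mul_le_mul_of_nonneg_left (abs_div_sqrt_le_one_div_sqrt (by linarith)
      (mul_sq_le_secondMoment hβ₂0 hβ₂1.le (hv0 j) (fun s hs => hvrec s hs j) ht)) (abs_nonneg η)
  have hlin : fderiv ℝ F (x t) (x (t + 1) - x t)
      = -∑ j, η * fderiv ℝ F (x t) (EuclideanSpace.single j 1) * m t j / √(v t j) := by
    rw [EuclideanSpace.clm_apply_eq_sum, ← sum_neg_distrib]
    refine sum_congr rfl fun j _ => ?_
    rw [PiLp.sub_apply, hx t ht j]
    ring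
  have hquad := sum_mul_abs_mul_norm_le (fun j => (hL j).le) hstep
  rw [div_pow, sq_abs, Real.sq_sqrt (by linarith)] at hquad
  have hdescent := sub_le_fderiv_add_of_partial hF hsmooth (x t) (x (t + 1))
  have : η ^ 2 / (1 - β₂) * (∑ j, L j) / 2 = η ^ 2 * (∑ j, L j) / (2 * (1 - β₂)) := by
    field_simp
  linarith

theorem stmt_17 (d : ℕ) (F : EuclideanSpace ℝ (Fin d) → ℝ)
    (hF : Differentiable ℝ F) (L : Fin d → ℝ) (hL : ∀ j, 0 < L j)
    (η β₂ : ℝ) (hη : 0 < η) (hβ₂0 : 0 ≤ β₂) (hβ₂1 : β₂ < 1)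
    (hsmooth : ∀ x y : EuclideanSpace ℝ (Fin d), ∀ j : Fin d,
      |fderiv ℝ F x (EuclideanSpace.single j 1) - fderiv ℝ F y (EuclideanSpace.single j 1)|
        ≤ L j / Real.sqrt d * ‖x - y‖)
    (x m v : ℕ → EuclideanSpace ℝ (Fin d))
    (hv0 : ∀ j, v 0 j = 0)
    (hvrec : ∀ t : ℕ, 1 ≤ t → ∀ j, v t j = β₂ * v (t - 1) j + (1 - β₂) * (m t j) ^ 2)
    (hx : ∀ t : ℕ, 1 ≤ t → ∀ j, x (t + 1) j = x t j - η * m t j / Real.sqrt (v t j)) :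
    ∀ t : ℕ, 1 ≤ t →
      F (x (t + 1)) - F (x t)
        ≤ -(∑ j, η * fderiv ℝ F (x t) (EuclideanSpace.single j 1) * m t j
              / Real.sqrt (v t j))
          + η ^ 2 * (∑ j, L j) / (2 * (1 - β₂)) :=
  stmt_17_general d F hF L hL η β₂ hβ₂0 hβ₂1 hsmooth x m v hv0 hvrec hx
end
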